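/- arXiv:2006.08107 — 2 statements merged into one kernel-verified Lean document; each statement's English description precedes it below -/
import Mathlib

section
/- Let $\gamma\in C^2(\mathbb{R})$ satisfy $\gamma>0$ on $(-1,1)$, $\gamma(\pm1)=0$, $\gamma''(\pm1)>0$. Let $\eta:\mathbb{R}\to[-1,1]$ be a fixed function with $\eta(x)=1$ for $x\geq1$ and $\eta(x)=-1$ for $x\leq-1$. Suppose $u:\mathbb{R}\to[-1,1]$ is non-decreasing with $u(0)=0$, and set $v=u-\eta$. Then there exist constants $C_1,C_2>0$ depending only on $\gamma$ such that $\int_{\mathbb{R}}\gamma(u(x))\,dx + C_1 \geq C_2\|v\|_{L^2(\mathbb{R})}^2$. -/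
/-!
Near `1` the function `γ t - γ''(1)/4 · (t - 1)²` is convex, and `γ'(1) ≤ 0` because `γ > 0` to
the left of `1`; so `γ` lies above a parabola near `1`, and by compactness and positivity on all of
`[0, 1]`: `γ t ≥ K (t - 1)²` there. Symmetrically `γ t ≥ K (t + 1)²` on `[-1, 0]`.
A non-decreasing `u` with `u 0 = 0` takes values in `[0, 1]` on `[1, ∞)`, where `η = 1`, and in
`[-1, 0]` on `(-∞, -1]`, where `η = -1`; there `K (u - η)² ≤ γ(u)`. On `[-1, 1]` we only use
`|u - η| ≤ 2`, which costs `C₁ = 8 K`.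
-/

open MeasureTheory Set Filter Topology

lemma deriv_nonpos_of_eventually_le_nhdsLT {f : ℝ → ℝ} {a : ℝ} (hf : DifferentiableAt ℝ f a)
    (h : ∀ᶠ x in 𝓝[<] a, f a ≤ f x) : deriv f a ≤ 0 := by
  refine le_of_tendsto ((hasDerivAt_iff_tendsto_slope.mp hf.hasDerivAt).mono_left
    (nhdsLT_le_nhdsNE a)) ?_
  filter_upwards [h, self_mem_nhdsWithin] with x hfx hx
  rw [slope_def_field]
  exact div_nonpos_of_nonneg_of_nonpos (by linarith) (by linarith [mem_Iio.mp hx])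

/-- `f t - f''(a)/4 · (t - a)²` is convex near `a`, so it lies above its tangent line at `a`,
which is nonnegative to the left of `a`. -/
lemma exists_Icc_mul_sq_sub_le_of_deriv_nonpos {f : ℝ → ℝ} {a : ℝ} (hf : ContDiff ℝ 2 f)
    (hfa : f a = 0) (hf' : deriv f a ≤ 0) (hf'' : 0 < iteratedDeriv 2 f a) :
    ∃ ε > 0, ∀ t ∈ Icc (a - ε) a, iteratedDeriv 2 f a / 4 * (t - a) ^ 2 ≤ f t := by
  set c := iteratedDeriv 2 f a / 4 with hc
  obtain ⟨ε, hε, hball⟩ := Metric.eventually_nhds_iff.mp <|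
    (hf.continuous_iteratedDeriv 2 le_rfl).continuousAt.eventually
      (lt_mem_nhds (show 2 * c < iteratedDeriv 2 f a by linarith))
  set φ : ℝ → ℝ := fun t => f t - c * (t - a) ^ 2
  have hφ' (t : ℝ) : HasDerivAt φ (deriv f t - 2 * c * (t - a)) t := by
    refine (((hf.differentiable (by norm_num) t).hasDerivAt).sub
      ((((hasDerivAt_id' t).sub_const a).pow 2).const_mul c)).congr_deriv ?_
    push_cast; ring
  have hφ'' (t : ℝ) : HasDerivAt (fun t => deriv f t - 2 * c * (t - a))
      (iteratedDeriv 2 f t - 2 * c) t := by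
    have hd : HasDerivAt (deriv f) (iteratedDeriv 2 f t) t := by
      rw [iteratedDeriv_succ, iteratedDeriv_one]
      exact (hf.differentiable_deriv_two t).hasDerivAt
    exact (hd.sub (((hasDerivAt_id' t).sub_const a).const_mul (2 * c))).congr_deriv (by ring)
  have hconv : ConvexOn ℝ (Icc (a - ε / 2) a) φ := by
    refine convexOn_of_hasDerivWithinAt2_nonneg (convex_Icc _ _)
      (fun t _ => (hφ' t).continuousAt.continuousWithinAt)
      (fun t _ => (hφ' t).hasDerivWithinAt) (fun t _ => (hφ'' t).hasDerivWithinAt) ?_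
    rintro t ht
    rw [interior_Icc] at ht
    have := hball (show dist t a < ε by
      rw [Real.dist_eq, abs_lt]; constructor <;> linarith [ht.1, ht.2])
    linarith
  refine ⟨ε / 2, by positivity, fun t ht => ?_⟩
  rcases ht.2.eq_or_lt with rfl | hta
  · simp [hfa]
  have hslope := hconv.slope_le_of_hasDerivAt ht (right_mem_Icc.2 (by linarith)) hta (hφ' a)
  rw [slope_def_field, div_le_iff₀ (by linarith)] at hslope
  simp only [φ, hfa, sub_self] at hslope
  nlinarith

lemma exists_pos_mul_sq_sub_le_of_right_zero {f : ℝ → ℝ} {a b : ℝ} (hf : ContDiff ℝ 2 f)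
    (hba : b < a) (hpos : ∀ t ∈ Ico b a, 0 < f t) (hfa : f a = 0)
    (hf'' : 0 < iteratedDeriv 2 f a) :
    ∃ K > 0, ∀ t ∈ Icc b a, K * (t - a) ^ 2 ≤ f t := by
  have hf' : deriv f a ≤ 0 := deriv_nonpos_of_eventually_le_nhdsLT
    (hf.differentiable (by norm_num) a)
    (by filter_upwards [Ioo_mem_nhdsLT hba] with t ht using hfa ▸ (hpos t ⟨ht.1.le, ht.2⟩).le)
  obtain ⟨ε, hε, hnear⟩ := exists_Icc_mul_sq_sub_le_of_deriv_nonpos hf hfa hf' hf''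
  obtain ⟨m, hm, hfar⟩ := (isCompact_Icc (a := b) (b := a - ε)).exists_forall_le'
    hf.continuous.continuousOn (fun t ht => hpos t ⟨ht.1, by linarith [ht.2]⟩)
  refine ⟨min (iteratedDeriv 2 f a / 4) (m / (a - b) ^ 2), by positivity, fun t ht => ?_⟩
  rcases le_or_gt t (a - ε) with htε | htε
  · have hsq : (t - a) ^ 2 ≤ (a - b) ^ 2 := by nlinarith [ht.1, ht.2]
    calc min (iteratedDeriv 2 f a / 4) (m / (a - b) ^ 2) * (t - a) ^ 2
        ≤ m / (a - b) ^ 2 * (a - b) ^ 2 := by gcongr; exact min_le_right _ _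
      _ = m := div_mul_cancel₀ _ (by positivity)
      _ ≤ f t := hfar t ⟨ht.1, htε⟩
  · calc min (iteratedDeriv 2 f a / 4) (m / (a - b) ^ 2) * (t - a) ^ 2
        ≤ iteratedDeriv 2 f a / 4 * (t - a) ^ 2 := by gcongr; exact min_le_left _ _
      _ ≤ f t := hnear t ⟨htε.le, ht.2⟩

lemma exists_pos_mul_sq_sub_le_of_left_zero {f : ℝ → ℝ} {a b : ℝ} (hf : ContDiff ℝ 2 f)
    (hab : a < b) (hpos : ∀ t ∈ Ioc a b, 0 < f t) (hfa : f a = 0)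
    (hf'' : 0 < iteratedDeriv 2 f a) :
    ∃ K > 0, ∀ t ∈ Icc a b, K * (t - a) ^ 2 ≤ f t := by
  obtain ⟨K, hK, hle⟩ := exists_pos_mul_sq_sub_le_of_right_zero (f := fun x => f (-x))
    (a := -a) (b := -b) (hf.comp contDiff_neg) (neg_lt_neg hab)
    (fun t ht => hpos (-t) ⟨lt_neg_of_lt_neg ht.2, neg_le.mp ht.1⟩) (by simpa using hfa)
    (by simpa [iteratedDeriv_comp_neg] using hf'')
  refine ⟨K, hK, fun t ht => ?_⟩
  have := hle (-t) ⟨neg_le_neg ht.2, neg_le_neg ht.1⟩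
  rw [neg_neg, show -t - -a = -(t - a) by ring, neg_sq] at this
  exact this

lemma ofReal_mul_sq_sub_le {γ η u : ℝ → ℝ} {K : ℝ} (hK : 0 ≤ K)
    (hγ_one : ∀ t ∈ Icc 0 1, K * (t - 1) ^ 2 ≤ γ t)
    (hγ_neg_one : ∀ t ∈ Icc (-1) 0, K * (t + 1) ^ 2 ≤ γ t)
    (hη : ∀ x, η x ∈ Icc (-1 : ℝ) 1) (hη_one : ∀ x : ℝ, 1 ≤ x → η x = 1)
    (hη_neg_one : ∀ x : ℝ, x ≤ -1 → η x = -1) (hu : Monotone u)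
    (hu_mem : ∀ x, u x ∈ Icc (-1 : ℝ) 1) (hu₀ : u 0 = 0) (x : ℝ) :
    ENNReal.ofReal (K * (u x - η x) ^ 2)
      ≤ ENNReal.ofReal (γ (u x))
        + (Icc (-1) 1).indicator (fun _ => ENNReal.ofReal (4 * K)) x := by
  by_cases hx : x ∈ Icc (-1 : ℝ) 1
  · rw [indicator_of_mem hx]
    refine le_add_left (ENNReal.ofReal_le_ofReal ?_)
    obtain ⟨hu_lo, hu_hi⟩ := hu_mem x
    obtain ⟨hη_lo, hη_hi⟩ := hη x
    rw [mul_comm 4 K]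
    exact mul_le_mul_of_nonneg_left (by nlinarith) hK
  refine le_add_right (ENNReal.ofReal_le_ofReal ?_)
  rcases not_and_or.mp hx with hx | hx <;> rw [not_le] at hx
  · rw [hη_neg_one x hx.le, sub_neg_eq_add]
    exact hγ_neg_one (u x) ⟨(hu_mem x).1, hu₀ ▸ hu (by linarith)⟩
  · rw [hη_one x hx.le]
    exact hγ_one (u x) ⟨hu₀ ▸ hu (by linarith), (hu_mem x).2⟩

lemma ofReal_mul_lintegral_sq_sub_le {γ η u : ℝ → ℝ} {K : ℝ} (hK : 0 ≤ K)
    (hγ_one : ∀ t ∈ Icc 0 1, K * (t - 1) ^ 2 ≤ γ t)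
    (hγ_neg_one : ∀ t ∈ Icc (-1) 0, K * (t + 1) ^ 2 ≤ γ t)
    (hη : ∀ x, η x ∈ Icc (-1 : ℝ) 1) (hη_one : ∀ x : ℝ, 1 ≤ x → η x = 1)
    (hη_neg_one : ∀ x : ℝ, x ≤ -1 → η x = -1) (hu : Monotone u)
    (hu_mem : ∀ x, u x ∈ Icc (-1 : ℝ) 1) (hu₀ : u 0 = 0) :
    ENNReal.ofReal K * ∫⁻ x, ENNReal.ofReal ((u x - η x) ^ 2)
      ≤ (∫⁻ x, ENNReal.ofReal (γ (u x))) + ENNReal.ofReal (8 * K) := by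
  have hwindow : ∫⁻ x, (Icc (-1 : ℝ) 1).indicator (fun _ => ENNReal.ofReal (4 * K)) x
      = ENNReal.ofReal (8 * K) := by
    rw [lintegral_indicator measurableSet_Icc, setLIntegral_const, Real.volume_Icc,
      ← ENNReal.ofReal_mul (by positivity)]
    ring_nf
  calc ENNReal.ofReal K * ∫⁻ x, ENNReal.ofReal ((u x - η x) ^ 2)
      = ∫⁻ x, ENNReal.ofReal (K * (u x - η x) ^ 2) := by
        rw [← lintegral_const_mul' _ _ ENNReal.ofReal_ne_top]
        simp_rw [ENNReal.ofReal_mul hK]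
    _ ≤ ∫⁻ x, (ENNReal.ofReal (γ (u x))
          + (Icc (-1) 1).indicator (fun _ => ENNReal.ofReal (4 * K)) x) :=
        lintegral_mono
          (ofReal_mul_sq_sub_le hK hγ_one hγ_neg_one hη hη_one hη_neg_one hu hu_mem hu₀)
    _ = (∫⁻ x, ENNReal.ofReal (γ (u x))) + ENNReal.ofReal (8 * K) := by
        rw [lintegral_add_right _ (measurable_const.indicator measurableSet_Icc), hwindow]

/-- Potential energy controls the `L²` distance from the reference profile: for a double-well
potential `γ` there are constants `C₁, C₂ > 0` depending only on `γ` such that for every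
reference profile `η` and every non-decreasing `u : ℝ → [-1,1]` with `u(0) = 0`,
`∫ γ(u) + C₁ ≥ C₂ ‖u - η‖²_{L²}`. -/
theorem stmt_11 (γ : ℝ → ℝ) (hγ : ContDiff ℝ 2 γ)
    (hpos : ∀ x ∈ Set.Ioo (-1 : ℝ) 1, 0 < γ x)
    (h1 : γ 1 = 0) (hm1 : γ (-1) = 0)
    (h2 : 0 < iteratedDeriv 2 γ 1) (h2' : 0 < iteratedDeriv 2 γ (-1)) :
    ∃ C₁ C₂ : ℝ, 0 < C₁ ∧ 0 < C₂ ∧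
      ∀ η u : ℝ → ℝ,
        (∀ x, η x ∈ Set.Icc (-1 : ℝ) 1) →
        (∀ x : ℝ, 1 ≤ x → η x = 1) → (∀ x : ℝ, x ≤ -1 → η x = -1) →
        Monotone u → (∀ x, u x ∈ Set.Icc (-1 : ℝ) 1) → u 0 = 0 →
        ENNReal.ofReal C₂ * ∫⁻ x : ℝ, ENNReal.ofReal ((u x - η x) ^ 2)
          ≤ (∫⁻ x : ℝ, ENNReal.ofReal (γ (u x))) + ENNReal.ofReal C₁ := by
  obtain ⟨K₁, hK₁, hwell_one⟩ := exists_pos_mul_sq_sub_le_of_right_zero hγ zero_lt_one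
    (fun t ht => hpos t ⟨by linarith [ht.1], ht.2⟩) h1 h2
  obtain ⟨K₂, hK₂, hwell_neg_one⟩ := exists_pos_mul_sq_sub_le_of_left_zero hγ neg_one_lt_zero
    (fun t ht => hpos t ⟨ht.1, by linarith [ht.2]⟩) hm1 h2'
  set K := min K₁ K₂
  have hK : 0 < K := lt_min hK₁ hK₂
  refine ⟨8 * K, K, by positivity, hK, fun η u hη hη_one hη_neg_one hu hu_mem hu₀ =>
    ofReal_mul_lintegral_sq_sub_le hK.le (fun t ht => ?_) (fun t ht => ?_) hη hη_one hη_neg_one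
      hu hu_mem hu₀⟩
  · exact (mul_le_mul_of_nonneg_right (min_le_left _ _) (sq_nonneg _)).trans (hwell_one t ht)
  · have := hwell_neg_one t ht
    rw [sub_neg_eq_add] at this
    exact (mul_le_mul_of_nonneg_right (min_le_right _ _) (sq_nonneg _)).trans this
end

section
/- Let $\eta:\mathbb{R}\to[-1,1]$ be smooth with $\eta=1$ on $[1,\infty)$ and $\eta=-1$ on $(-\infty,-1]$. Then for every $c\in\mathbb{R}$, $\int_{\mathbb{R}}\int_{\mathbb{R}}\left[\frac{(\eta(x+c)-\eta(x'+c))^2}{(x-x')^2} - \frac{(\eta(x)-\eta(x'))^2}{(x-x')^2}\right]dx\,dx' = 0$, where the double integral of the difference is absolutely convergent. -/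
open MeasureTheory

/-- The shear `(x, u) ↦ (x, x - u)` as a measurable equivalence of `ℝ × ℝ` (an involution). -/
def shearPN : (ℝ × ℝ) ≃ᵐ (ℝ × ℝ) where
  toFun p := (p.1, p.1 - p.2)
  invFun p := (p.1, p.1 - p.2)
  left_inv p := by simp
  right_inv p := by simp
  measurable_toFun := measurable_fst.prodMk (measurable_fst.sub measurable_snd)
  measurable_invFun := measurable_fst.prodMk (measurable_fst.sub measurable_snd)

@[simp] lemma shearPN_apply (p : ℝ × ℝ) : shearPN p = (p.1, p.1 - p.2) := rfl

/-- The shear preserves two-dimensional Lebesgue measure. -/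
lemma shearPN_mp : MeasurePreserving shearPN (volume : Measure (ℝ × ℝ)) volume := by
  rw [show (volume : Measure (ℝ × ℝ)) = (volume : Measure ℝ).prod volume from rfl]
  have : MeasurePreserving (fun p : ℝ × ℝ => (p.1, p.1 - p.2))
      ((volume : Measure ℝ).prod volume) ((volume : Measure ℝ).prod volume) :=
    (MeasurePreserving.id volume).skew_product (g := fun x u => x - u)
      (measurable_fst.sub measurable_snd)
      (Filter.Eventually.of_forall fun x =>
        (Measure.measurePreserving_sub_left volume x).map_eq)
  exact this

/-- A smooth function which is constant near `±∞` is globally Lipschitz. -/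
lemma etaLip (η : ℝ → ℝ) (hsmooth : ContDiff ℝ (⊤ : ℕ∞) η)
    (h1 : ∀ x : ℝ, 1 ≤ x → η x = 1) (hm1 : ∀ x : ℝ, x ≤ -1 → η x = -1) :
    ∃ L : ℝ, 0 ≤ L ∧ ∀ x y : ℝ, |η x - η y| ≤ L * |x - y| := by
  have hdiff : Differentiable ℝ η := hsmooth.differentiable (by simp)
  have hcont : Continuous (deriv η) := hsmooth.continuous_deriv (by simp)
  obtain ⟨C, hC⟩ := (isCompact_Icc (a := (-1:ℝ)) (b := 1)).exists_bound_of_continuousOn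
    hcont.continuousOn
  refine ⟨max C 0, le_max_right _ _, ?_⟩
  have hder : ∀ x : ℝ, ‖deriv η x‖ ≤ max C 0 := by
    intro x
    rcases le_or_gt x (-1) with hx | hx
    · rcases eq_or_lt_of_le hx with rfl | hx'
      · exact le_trans (hC _ (by constructor <;> norm_num)) (le_max_left _ _)
      · have : deriv η x = 0 := by
          have hev : η =ᶠ[nhds x] fun _ => (-1 : ℝ) := by
            filter_upwards [Iio_mem_nhds hx'] with y hy
            exact hm1 y (le_of_lt hy)
          rw [hev.deriv_eq, deriv_const]
        simp [this, le_max_right]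
    · rcases le_or_gt x 1 with hx2 | hx2
      · exact le_trans (hC _ ⟨le_of_lt hx, hx2⟩) (le_max_left _ _)
      · have : deriv η x = 0 := by
          have hev : η =ᶠ[nhds x] fun _ => (1 : ℝ) := by
            filter_upwards [Ioi_mem_nhds hx2] with y hy
            exact h1 y (le_of_lt hy)
          rw [hev.deriv_eq, deriv_const]
        simp [this, le_max_right]
  intro x y
  have := convex_univ.norm_image_sub_le_of_norm_deriv_le
    (fun z _ => hdiff z) (fun z _ => hder z) (Set.mem_univ y) (Set.mem_univ x)
  simpa [Real.norm_eq_abs] using this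

/-- Translation invariance of the renormalized `Ḣ^{1/2}` Gagliardo energy: for a smooth
transition profile `η` with values in `[-1,1]`, `η ≡ 1` on `[1,∞)` and `η ≡ -1` on
`(-∞,-1]`, and any shift `c`, the difference of Gagliardo integrands is absolutely
integrable on `ℝ × ℝ` and its double integral vanishes. -/
theorem stmt_17 (η : ℝ → ℝ) (hsmooth : ContDiff ℝ (⊤ : ℕ∞) η)
    (hrange : ∀ x, η x ∈ Set.Icc (-1 : ℝ) 1)
    (h1 : ∀ x : ℝ, 1 ≤ x → η x = 1) (hm1 : ∀ x : ℝ, x ≤ -1 → η x = -1)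
    (c : ℝ) :
    Integrable (fun p : ℝ × ℝ =>
      ((η (p.1 + c) - η (p.2 + c)) ^ 2 - (η p.1 - η p.2) ^ 2) / (p.1 - p.2) ^ 2) ∧
    (∫ p : ℝ × ℝ,
      ((η (p.1 + c) - η (p.2 + c)) ^ 2 - (η p.1 - η p.2) ^ 2) / (p.1 - p.2) ^ 2) = 0 := by
  obtain ⟨L, hL0, hLip⟩ := etaLip η hsmooth h1 hm1
  set D : ℝ × ℝ → ℝ := fun p =>
    ((η (p.1 + c) - η (p.2 + c)) ^ 2 - (η p.1 - η p.2) ^ 2) / (p.1 - p.2) ^ 2 with hDdef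
  have hab : ∀ x, -1 ≤ η x ∧ η x ≤ 1 := fun x => ⟨(hrange x).1, (hrange x).2⟩
  -- η is unchanged by the shift outside a compact set
  have hplateau : ∀ x : ℝ, 1 + |c| < |x| → η (x + c) = η x := by
    intro x hx
    rcases lt_abs.mp hx with hx | hx
    · rw [h1 x (by linarith [abs_nonneg c]), h1 (x + c) (by linarith [neg_abs_le c])]
    · rw [hm1 x (by linarith [abs_nonneg c]), hm1 (x + c) (by linarith [le_abs_self c])]
  -- Lipschitz bound on squares
  have hsq : ∀ x y : ℝ, (η x - η y) ^ 2 ≤ L ^ 2 * (x - y) ^ 2 := by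
    intro x y
    have h := hLip x y
    have h2 : |η x - η y| * |η x - η y| ≤ (L * |x - y|) * (L * |x - y|) :=
      mul_self_le_mul_self (abs_nonneg _) h
    nlinarith [sq_abs (η x - η y), sq_abs (x - y)]
  -- the cutoff function
  set χ : ℝ → ℝ := Set.indicator (Set.Icc (-(1 + |c|)) (1 + |c|)) (fun _ => (1:ℝ)) with hχdef
  have hχ_nonneg : ∀ x, 0 ≤ χ x := fun x =>
    Set.indicator_nonneg (fun _ _ => zero_le_one) x
  have hχ_one : ∀ x : ℝ, |x| ≤ 1 + |c| → χ x = 1 := by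
    intro x hx
    have : x ∈ Set.Icc (-(1 + |c|)) (1 + |c|) := by
      rcases abs_le.mp hx with ⟨h₁, h₂⟩; exact ⟨h₁, h₂⟩
    rw [hχdef]
    exact Set.indicator_of_mem this _
  set K : ℝ := 8 + L ^ 2 with hKdef
  have hK_pos : 0 < K := by positivity
  -- core pointwise estimate without cutoff
  have hcore : ∀ x y : ℝ, |D (x, y)| ≤ K * (1 + (x - y) ^ 2)⁻¹ := by
    intro x y
    by_cases hxy : x = y
    · subst hxy
      have : D (x, x) = 0 := by simp [hDdef]
      rw [this, abs_zero]
      positivity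
    · have hu2 : (0:ℝ) < (x - y) ^ 2 := by
        have : x - y ≠ 0 := sub_ne_zero.mpr hxy
        positivity
      have h8 : |(η (x + c) - η (y + c)) ^ 2 - (η x - η y) ^ 2| ≤ 8 := by
        rcases hab x with ⟨a1, a2⟩; rcases hab y with ⟨b1, b2⟩
        rcases hab (x + c) with ⟨a1', a2'⟩; rcases hab (y + c) with ⟨b1', b2'⟩
        rw [abs_le]; constructor <;> nlinarith
      have hLb : |(η (x + c) - η (y + c)) ^ 2 - (η x - η y) ^ 2| ≤ L ^ 2 * (x - y) ^ 2 := by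
        have hA : (η (x + c) - η (y + c)) ^ 2 ≤ L ^ 2 * (x - y) ^ 2 := by
          have := hsq (x + c) (y + c)
          simpa using this
        have hB : (η x - η y) ^ 2 ≤ L ^ 2 * (x - y) ^ 2 := hsq x y
        rw [abs_le]; constructor <;> nlinarith [sq_nonneg (η (x + c) - η (y + c)),
          sq_nonneg (η x - η y)]
      have : |D (x, y)| = |(η (x + c) - η (y + c)) ^ 2 - (η x - η y) ^ 2| / (x - y) ^ 2 := by
        rw [hDdef, abs_div, abs_of_pos hu2]
      rw [this, div_le_iff₀ hu2]
      have hpos : (0:ℝ) < 1 + (x - y) ^ 2 := by positivity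
      have hrw2 : K * (1 + (x - y) ^ 2)⁻¹ * (x - y) ^ 2 = K * (x - y) ^ 2 / (1 + (x - y) ^ 2) := by
        field_simp
      rw [hrw2, le_div_iff₀ hpos]
      nlinarith [mul_le_mul_of_nonneg_right h8 (le_of_lt hu2)]
  -- full pointwise domination
  set M : ℝ × ℝ → ℝ := fun p =>
    K * ((1 + (p.1 - p.2) ^ 2)⁻¹ * χ p.1) + K * ((1 + (p.1 - p.2) ^ 2)⁻¹ * χ p.2) with hMdef
  have hbound : ∀ p : ℝ × ℝ, ‖D p‖ ≤ M p := by
    rintro ⟨x, y⟩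
    rw [Real.norm_eq_abs]
    have hinv_pos : (0:ℝ) < (1 + (x - y) ^ 2)⁻¹ := by positivity
    by_cases hx : |x| ≤ 1 + |c|
    · have h1' := hχ_one x hx
      have h2' := hχ_nonneg y
      have := hcore x y
      simp only [hMdef]
      have : |D (x, y)| ≤ K * ((1 + (x - y) ^ 2)⁻¹ * χ x) := by
        rw [h1', mul_one]; exact hcore x y
      nlinarith [mul_nonneg (le_of_lt hK_pos) (mul_nonneg (le_of_lt hinv_pos) h2')]
    · by_cases hy : |y| ≤ 1 + |c|
      · have h1' := hχ_one y hy
        have h2' := hχ_nonneg x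
        have : |D (x, y)| ≤ K * ((1 + (x - y) ^ 2)⁻¹ * χ y) := by
          rw [h1', mul_one]; exact hcore x y
        simp only [hMdef]
        nlinarith [mul_nonneg (le_of_lt hK_pos) (mul_nonneg (le_of_lt hinv_pos) h2')]
      · have hx' : 1 + |c| < |x| := lt_of_not_ge hx
        have hy' : 1 + |c| < |y| := lt_of_not_ge hy
        have hD0 : D (x, y) = 0 := by
          simp only [hDdef, hplateau x hx', hplateau y hy', sub_self]
          ring
        rw [hD0, abs_zero]
        have := hχ_nonneg x; have := hχ_nonneg y
        simp only [hMdef]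
        positivity
  -- measurability
  have hχ_meas : Measurable χ := measurable_const.indicator measurableSet_Icc
  have hcont_eta : Continuous η := hsmooth.continuous
  have hD_meas : AEStronglyMeasurable D (volume : Measure (ℝ × ℝ)) := by
    apply Measurable.aestronglyMeasurable
    have hnum : Measurable fun p : ℝ × ℝ =>
        (η (p.1 + c) - η (p.2 + c)) ^ 2 - (η p.1 - η p.2) ^ 2 := by
      apply Measurable.sub
      · exact ((hcont_eta.measurable.comp (measurable_fst.add_const c)).sub
          (hcont_eta.measurable.comp (measurable_snd.add_const c))).pow_const 2
      · exact ((hcont_eta.measurable.comp measurable_fst).sub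
          (hcont_eta.measurable.comp measurable_snd)).pow_const 2
    exact hnum.div ((measurable_fst.sub measurable_snd).pow_const 2)
  -- integrability of the majorant
  have hK1 : Integrable (fun t : ℝ => (1 + t ^ 2)⁻¹) := integrable_inv_one_add_sq
  have hχ_int : Integrable χ := by
    rw [hχdef]
    exact ((integrableOn_const_iff (C := (1:ℝ))).mpr (Or.inr measure_Icc_lt_top)).integrable_indicator
      measurableSet_Icc
  have hF1 : Integrable (fun p : ℝ × ℝ => (1 + (p.1 - p.2) ^ 2)⁻¹ * χ p.1)
      ((volume : Measure ℝ).prod volume) := by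
    have hmF : AEStronglyMeasurable (fun p : ℝ × ℝ => (1 + (p.1 - p.2) ^ 2)⁻¹ * χ p.1)
        ((volume : Measure ℝ).prod volume) := by
      apply Measurable.aestronglyMeasurable
      exact ((((measurable_fst.sub measurable_snd).pow_const 2).const_add 1).inv).mul
        (hχ_meas.comp measurable_fst)
    rw [integrable_prod_iff hmF]
    constructor
    · refine Filter.Eventually.of_forall fun x => ?_
      exact (hK1.comp_sub_left x).mul_const (χ x)
    · have heq : (fun x : ℝ => ∫ y : ℝ, ‖(1 + (x - y) ^ 2)⁻¹ * χ x‖) =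
          fun x => (∫ t : ℝ, (1 + t ^ 2)⁻¹) * χ x := by
        funext x
        have hnn : ∀ y : ℝ, ‖(1 + (x - y) ^ 2)⁻¹ * χ x‖ = (1 + (x - y) ^ 2)⁻¹ * χ x := by
          intro y
          rw [Real.norm_eq_abs, abs_of_nonneg]
          exact mul_nonneg (by positivity) (hχ_nonneg x)
        simp_rw [hnn]
        rw [integral_mul_const]
        congr 1
        exact integral_sub_left_eq_self (fun t : ℝ => (1 + t ^ 2)⁻¹) volume x
      rw [heq]
      exact hχ_int.const_mul _
  have hF2 : Integrable (fun p : ℝ × ℝ => (1 + (p.1 - p.2) ^ 2)⁻¹ * χ p.2)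
      ((volume : Measure ℝ).prod volume) := by
    have hswap : Integrable ((fun p : ℝ × ℝ => (1 + (p.1 - p.2) ^ 2)⁻¹ * χ p.1) ∘ Prod.swap)
        ((volume : Measure ℝ).prod volume) := hF1.swap
    have heq : (fun p : ℝ × ℝ => (1 + (p.1 - p.2) ^ 2)⁻¹ * χ p.2) =
        (fun p : ℝ × ℝ => (1 + (p.1 - p.2) ^ 2)⁻¹ * χ p.1) ∘ Prod.swap := by
      funext p
      simp only [Function.comp_apply, Prod.fst_swap, Prod.snd_swap, Prod.swap]
      rw [show (p.2 - p.1) ^ 2 = (p.1 - p.2) ^ 2 by ring]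
    rw [heq]
    exact hswap
  have hM_int : Integrable M (volume : Measure (ℝ × ℝ)) := by
    rw [show (volume : Measure (ℝ × ℝ)) = (volume : Measure ℝ).prod volume from rfl]
    exact (hF1.const_mul K).add (hF2.const_mul K)
  have hInt : Integrable D (volume : Measure (ℝ × ℝ)) :=
    hM_int.mono' hD_meas (Filter.Eventually.of_forall hbound)
  refine ⟨hInt, ?_⟩
  -- the vanishing of the integral, via the shear change of variables
  have hcompInt : Integrable (D ∘ shearPN) (volume : Measure (ℝ × ℝ)) :=
    (shearPN_mp.integrable_comp_emb shearPN.measurableEmbedding).mpr hInt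
  have hI0 : (∫ p : ℝ × ℝ, D p) = ∫ p : ℝ × ℝ, D (shearPN p) :=
    (shearPN_mp.integral_comp shearPN.measurableEmbedding D).symm
  have hcompInt' : Integrable (fun p : ℝ × ℝ => D (shearPN p))
      ((volume : Measure ℝ).prod volume) := hcompInt
  calc (∫ p : ℝ × ℝ, D p) = ∫ p : ℝ × ℝ, D (shearPN p) := hI0
    _ = ∫ u : ℝ, ∫ x : ℝ, D (shearPN (x, u)) := by
        rw [show (volume : Measure (ℝ × ℝ)) = (volume : Measure ℝ).prod volume from rfl]
        exact integral_prod_symm _ hcompInt'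
    _ = 0 := by
        apply integral_eq_zero_of_ae
        have h0 : ∀ᵐ u : ℝ, u ≠ 0 := by
          refine ae_iff.mpr ?_
          simp only [ne_eq, not_not, Set.setOf_eq_eq_singleton]
          exact measure_singleton 0
        filter_upwards [h0] with u hu
        simp only [shearPN_apply, hDdef, Pi.zero_apply]
        have hq_cont : Continuous (fun x : ℝ => (η x - η (x - u)) ^ 2) :=
          (hcont_eta.sub (hcont_eta.comp (continuous_id.sub continuous_const))).pow 2
        have hq_supp : HasCompactSupport (fun x : ℝ => (η x - η (x - u)) ^ 2) := by
          apply HasCompactSupport.intro (isCompact_Icc (a := -(1 + |u|)) (b := 1 + |u|))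
          intro x hx
          simp only [Set.mem_Icc, not_and_or, not_le] at hx
          rcases hx with hx | hx
          · rw [hm1 x (by linarith [abs_nonneg u]), hm1 (x - u) (by linarith [neg_abs_le u])]
            ring
          · rw [h1 x (by linarith [abs_nonneg u]), h1 (x - u) (by linarith [le_abs_self u])]
            ring
        have hq_int : Integrable (fun x : ℝ => (η x - η (x - u)) ^ 2) :=
          hq_cont.integrable_of_hasCompactSupport hq_supp
        have hrw : (fun x : ℝ =>
            ((η (x + c) - η (x - u + c)) ^ 2 - (η x - η (x - u)) ^ 2) / (x - (x - u)) ^ 2) =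
            fun x : ℝ => ((η (x + c) - η ((x + c) - u)) ^ 2 - (η x - η (x - u)) ^ 2) *
              ((u : ℝ) ^ 2)⁻¹ := by
          funext x
          rw [show x - (x - u) = u by ring, show x - u + c = x + c - u by ring, div_eq_mul_inv]
        rw [hrw, integral_mul_const]
        have hz : (∫ x : ℝ, ((η (x + c) - η ((x + c) - u)) ^ 2 - (η x - η (x - u)) ^ 2)) = 0 := by
          rw [integral_sub (hq_int.comp_add_right c) hq_int,
            integral_add_right_eq_self (fun x : ℝ => (η x - η (x - u)) ^ 2) c, sub_self]
        rw [hz, zero_mul]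
end
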